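/- arXiv:q-alg/9601019 — 2 statements merged into one kernel-verified Lean document; each statement's English description precedes it below -/
import Mathlib

section
/- Let k be a field of characteristic zero (e.g. the rationals) and let L be the free Lie algebra over k on a set X of generators. For a generator x_i (i ∈ X), an element e of L satisfies [e, x_i] = 0 if and only if e is a scalar multiple of x_i. In other words, the centralizer of a generator x_i in the free Lie algebra is the one-dimensional subspace spanned by x_i. -/
noncomputable section
namespace FLAaux
open FreeLieAlgebra
attribute [local instance 100] LieRing.ofAssociativeRing

variable {X : Type*}

def dW : List X → FreeLieAlgebra ℚ X
  | [] => 0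
  | [j] => of ℚ j
  | j :: t :: ts => ⁅of ℚ j, dW (t :: ts)⁆

lemma dW_cons (j : X) {t : List X} (h : t ≠ []) : dW (j :: t) = ⁅of ℚ j, dW t⁆ := by
  cases t with
  | nil => simp at h
  | cons a l => rfl

def DD : MonoidAlgebra ℚ (FreeMonoid X) →ₗ[ℚ] FreeLieAlgebra ℚ X :=
  (Finsupp.linearCombination ℚ (fun w : FreeMonoid X => dW w.toList)).comp
    (MonoidAlgebra.coeffLinearEquiv ℚ).toLinearMap

lemma DD_single (w : FreeMonoid X) (r : ℚ) :
    DD (MonoidAlgebra.single w r) = r • dW w.toList := by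
  exact Finsupp.linearCombination_single ℚ (v := fun w : FreeMonoid X => dW w.toList) r w

def adOf : FreeMonoid X →* Module.End ℚ (FreeLieAlgebra ℚ X) :=
  FreeMonoid.lift fun j => (LieAlgebra.ad ℚ (FreeLieAlgebra ℚ X) (of ℚ j)
    : Module.End ℚ (FreeLieAlgebra ℚ X))

def th : MonoidAlgebra ℚ (FreeMonoid X) →ₐ[ℚ] Module.End ℚ (FreeLieAlgebra ℚ X) :=
  MonoidAlgebra.lift ℚ (Module.End ℚ (FreeLieAlgebra ℚ X)) (FreeMonoid X) adOf

lemma th_single (w : FreeMonoid X) (r : ℚ) :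
    th (MonoidAlgebra.single w r) = r • adOf w :=
  MonoidAlgebra.lift_single _ _ _

def ph : FreeLieAlgebra ℚ X →ₗ⁅ℚ⁆ MonoidAlgebra ℚ (FreeMonoid X) :=
  FreeLieAlgebra.lift ℚ fun j => (MonoidAlgebra.single (FreeMonoid.of j) 1)

lemma ph_of (j : X) : ph (of ℚ j) = MonoidAlgebra.single (FreeMonoid.of j) (1:ℚ) :=
  FreeLieAlgebra.lift_of_apply _ j

/-- Key: `dW (l ++ [j]) = adOf l (of j)`. -/
lemma dW_append_singleton (l : List X) (j : X) :
    dW (l ++ [j]) = adOf (FreeMonoid.ofList l) (of ℚ j) := by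
  induction l with
  | nil => simp [dW, adOf, FreeMonoid.ofList_nil]
  | cons m t ih =>
      have h : (t ++ [j]) ≠ [] := by simp
      rw [List.cons_append, dW_cons m h, ih, FreeMonoid.ofList_cons, map_mul]
      simp [adOf, LieAlgebra.ad_apply, Module.End.mul_apply]

lemma th_of_ph : ∀ u : FreeLieAlgebra ℚ X, th (ph u) = LieAlgebra.ad ℚ _ u := by
  have : (th.toLieHom.comp ph : FreeLieAlgebra ℚ X →ₗ⁅ℚ⁆ Module.End ℚ (FreeLieAlgebra ℚ X))
      = LieAlgebra.ad ℚ (FreeLieAlgebra ℚ X) := by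
    apply FreeLieAlgebra.hom_ext
    intro j
    show th (ph (of ℚ j)) = _
    rw [ph_of, th_single]
    simp [adOf]
  intro u
  exact DFunLike.congr_fun this u

/-- Dynkin's key identity: `D (a * φ u) = θ a (D (φ u))` for `u = of j`. -/
lemma DD_mul_single (a : MonoidAlgebra ℚ (FreeMonoid X)) (j : X) :
    DD (a * MonoidAlgebra.single (FreeMonoid.of j) 1) = th a (of ℚ j) := by
  induction a using MonoidAlgebra.induction_linear with
  | zero => simp
  | add f g hf hg => rw [add_mul, map_add, map_add, hf, hg, LinearMap.add_apply]
  | single w r =>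
      rw [MonoidAlgebra.single_mul_single, mul_one, DD_single, th_single]
      have : FreeMonoid.toList (w * FreeMonoid.of j) = w.toList ++ [j] := rfl
      rw [this, dW_append_singleton]
      rfl


def mu : FreeMagma X → FreeLieAlgebra ℚ X
  | .of j => of ℚ j
  | .mul a b => ⁅mu a, mu b⁆

example (m n : FreeMagma X) : (m * n).length = m.length + n.length := rfl
example (j : X) : (FreeMagma.of j).length = 1 := rfl

def al (t : ℚ) : FreeLieAlgebra ℚ X →ₗ⁅ℚ⁆ FreeLieAlgebra ℚ X :=
  FreeLieAlgebra.lift ℚ fun j => t • of ℚ j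

lemma al_mu (t : ℚ) (m : FreeMagma X) : al t (mu m) = t ^ m.length • mu m := by
  induction m with
  | ih1 j => simp [mu, al, FreeLieAlgebra.lift_of_apply, FreeMagma.length]
  | ih2 a b iha ihb =>
      show al t ⁅mu a, mu b⁆ = _
      rw [LieHom.map_lie, iha, ihb, smul_lie, lie_smul, ← smul_assoc]
      have hl : (a * b).length = a.length + b.length := rfl
      rw [hl, pow_add]
      simp [smul_smul, mul_comm, mu, Mul.mul]

lemma mem_span_mu (e : FreeLieAlgebra ℚ X) :
    e ∈ Submodule.span ℚ (Set.range (mu : FreeMagma X → FreeLieAlgebra ℚ X)) := by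
  set p : Submodule ℚ (FreeLieAlgebra ℚ X) := Submodule.span ℚ (Set.range mu)
  have hlie : ∀ {x y : FreeLieAlgebra ℚ X}, x ∈ p → y ∈ p → ⁅x, y⁆ ∈ p := by
    intro x y hx hy
    induction hx using Submodule.span_induction with
    | mem x hx =>
        induction hy using Submodule.span_induction with
        | mem y hy =>
            obtain ⟨m, rfl⟩ := hx; obtain ⟨n, rfl⟩ := hy
            exact Submodule.subset_span ⟨m * n, rfl⟩
        | zero => simp
        | add y z hy hz ihy ihz => rw [lie_add]; exact add_mem ihy ihz
        | smul c y hy ihy => rw [lie_smul]; exact Submodule.smul_mem _ _ ihy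
    | zero => simp
    | add x z hx hz ihx ihz => rw [add_lie]; exact add_mem ihx ihz
    | smul c x hx ihx => rw [smul_lie]; exact Submodule.smul_mem _ _ ihx
  let K : LieSubalgebra ℚ (FreeLieAlgebra ℚ X) := { p with lie_mem' := hlie }
  have hof : ∀ j, of ℚ j ∈ K := fun j => Submodule.subset_span ⟨.of j, rfl⟩
  let g : FreeLieAlgebra ℚ X →ₗ⁅ℚ⁆ K := FreeLieAlgebra.lift ℚ fun j => ⟨of ℚ j, hof j⟩
  have : (K.incl.comp g) = LieHom.id := by
    apply FreeLieAlgebra.hom_ext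
    intro j
    show (K.incl) (g (of ℚ j)) = of ℚ j
    rw [show g (of ℚ j) = ⟨of ℚ j, hof j⟩ from FreeLieAlgebra.lift_of_apply _ j]
    rfl
  have he : K.incl (g e) = e := DFunLike.congr_fun this e
  rw [← he]; exact (g e).2


lemma ph_mu_mul (b c : FreeMagma X) :
    ph (mu (b * c)) = ph (mu b) * ph (mu c) - ph (mu c) * ph (mu b) := by
  show ph ⁅mu b, mu c⁆ = _
  rw [LieHom.map_lie, Ring.lie_def]

lemma DD_mul_ph_mu (m : FreeMagma X) :
    ∀ a, DD (a * ph (mu m)) = th a (DD (ph (mu m))) := by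
  induction m with
  | ih1 j =>
      intro a
      show DD (a * ph (of ℚ j)) = th a (DD (ph (of ℚ j)))
      rw [ph_of, DD_mul_single, DD_single, one_smul]
      rfl
  | ih2 b c ihb ihc =>
      intro a
      rw [ph_mu_mul, mul_sub, map_sub, ← mul_assoc, ← mul_assoc,
        ihc (a * ph (mu b)), ihb (a * ph (mu c)), map_mul, map_mul,
        Module.End.mul_apply, Module.End.mul_apply, map_sub,
        show DD (ph (mu b) * ph (mu c)) = th (ph (mu b)) (DD (ph (mu c))) from ihc _,
        show DD (ph (mu c) * ph (mu b)) = th (ph (mu c)) (DD (ph (mu b))) from ihb _,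
        map_sub]

lemma DD_ph_mu (m : FreeMagma X) :
    DD (ph (mu m)) = (m.length : ℚ) • mu m := by
  induction m with
  | ih1 j =>
      show DD (ph (of ℚ j)) = _
      rw [ph_of, DD_single, one_smul]
      show of ℚ j = ((1:ℕ) : ℚ) • mu (FreeMagma.of j)
      simp [mu]
  | ih2 b c ihb ihc =>
      rw [ph_mu_mul, map_sub,
        show DD (ph (mu b) * ph (mu c)) = th (ph (mu b)) (DD (ph (mu c))) from DD_mul_ph_mu c _,
        show DD (ph (mu c) * ph (mu b)) = th (ph (mu c)) (DD (ph (mu b))) from DD_mul_ph_mu b _,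
        th_of_ph, th_of_ph, ihb, ihc]
      rw [LieAlgebra.ad_apply, LieAlgebra.ad_apply, lie_smul, lie_smul,
        show ⁅mu c, mu b⁆ = -⁅mu b, mu c⁆ from (lie_skew _ _).symm]
      have hl : ((b * c).length : ℚ) = (b.length : ℚ) + (c.length : ℚ) := by
        rw [show (b * c).length = b.length + c.length from rfl, Nat.cast_add]
      rw [hl, show mu (b * c) = ⁅mu b, mu c⁆ from rfl, add_smul]
      module


section Cent

def Xi (i : X) : MonoidAlgebra ℚ (FreeMonoid X) := MonoidAlgebra.single (FreeMonoid.of i) 1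

variable {i : X} {a : MonoidAlgebra ℚ (FreeMonoid X)}

lemma factA (v : List X) :
    (a * Xi i).coeff (FreeMonoid.ofList (v ++ [i])) = a.coeff (FreeMonoid.ofList v) := by
  rw [FreeMonoid.ofList_append, FreeMonoid.ofList_singleton, Xi,
    MonoidAlgebra.coeff_mul_single_eq_coeff_mul (x := a) _ (fun b _ => mul_left_inj _), mul_one]

lemma factB (v : List X) :
    (Xi i * a).coeff (FreeMonoid.ofList (i :: v)) = a.coeff (FreeMonoid.ofList v) := by
  rw [FreeMonoid.ofList_cons, Xi,
    MonoidAlgebra.coeff_single_mul_eq_mul_coeff (x := a) _ (fun b _ => mul_right_inj _), one_mul]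

lemma factZ {j : X} (hj : j ≠ i) (v : List X) :
    (Xi i * a).coeff (FreeMonoid.ofList (j :: v)) = 0 := by
  apply MonoidAlgebra.single_mul_apply_of_not_exists_mul
  rintro ⟨d, hd⟩
  apply hj
  have := congrArg FreeMonoid.toList hd
  rw [FreeMonoid.toList_of_mul] at this
  exact (List.cons.injEq _ _ _ _ ▸ this).1

variable (hc : a * Xi i = Xi i * a)
include hc

lemma h1 {j : X} (hj : j ≠ i) (v : List X) : a.coeff (FreeMonoid.ofList (j :: v)) = 0 := by
  have := factA (a := a) (i := i) (j :: v)
  rw [hc, show (j :: v) ++ [i] = j :: (v ++ [i]) from rfl, factZ hj] at this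
  exact this.symm

lemma h2 (v : List X) :
    a.coeff (FreeMonoid.ofList (i :: v)) = a.coeff (FreeMonoid.ofList (v ++ [i])) := by
  have hA := factA (a := a) (i := i) (i :: v)
  rw [hc, show (i :: v) ++ [i] = i :: (v ++ [i]) from rfl, factB] at hA
  exact hA.symm

lemma h3 (k : ℕ) (v : List X) :
    a.coeff (FreeMonoid.ofList (List.replicate k i ++ v)) = a.coeff (FreeMonoid.ofList (v ++ List.replicate k i)) := by
  induction k generalizing v with
  | zero => simp
  | succ k ih =>
      rw [List.replicate_succ, List.cons_append, h2 hc, List.append_assoc, ih (v ++ [i]),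
        List.append_assoc]
      rfl

lemma h4 : ∀ (v : List X) (k : ℕ), a.coeff (FreeMonoid.ofList (List.replicate k i ++ v)) ≠ 0 →
    v = List.replicate v.length i := by
  intro v
  induction v with
  | nil => intro k _; rfl
  | cons j v' ih =>
      intro k h
      rw [h3 hc] at h
      rcases eq_or_ne j i with hj | hj
      · rw [hj] at h ⊢
        rw [show (i :: v') ++ List.replicate k i = i :: (v' ++ List.replicate k i) from rfl,
          h2 hc, List.append_assoc, ← List.replicate_succ' (n := k), ← h3 hc] at h
        have hv' := ih (k + 1) h
        rw [List.length_cons, List.replicate_succ]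
        exact congrArg (i :: ·) hv'
      · exact absurd (h1 hc hj _) h

lemma support_replicate {w : FreeMonoid X} (hw : a.coeff w ≠ 0) :
    w = FreeMonoid.ofList (List.replicate (FreeMonoid.toList w).length i) := by
  have := h4 hc (FreeMonoid.toList w) 0 (by simpa using hw)
  conv_lhs => rw [← FreeMonoid.ofList_toList w]
  rw [← this]

end Cent

lemma lieHom_map_sum {L₁ L₂ : Type*} [LieRing L₁] [LieAlgebra ℚ L₁] [LieRing L₂]
    [LieAlgebra ℚ L₂] (f : L₁ →ₗ⁅ℚ⁆ L₂) {ι : Type*} (s : Finset ι) (g : ι → L₁) :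
    f (∑ x ∈ s, g x) = ∑ x ∈ s, f (g x) :=
  map_sum f.toLinearMap g s

lemma sum_lie' {L : Type*} [LieRing L] {ι : Type*} (s : Finset ι)
    (g : ι → L) (y : L) : ⁅∑ x ∈ s, g x, y⁆ = ∑ x ∈ s, ⁅g x, y⁆ := by
  induction s using Finset.cons_induction with
  | empty => simp
  | cons a s ha ih => rw [Finset.sum_cons, Finset.sum_cons, add_lie, ih]

lemma dW_replicate_mem (i : X) (n : ℕ) :
    dW (List.replicate n i) ∈ Submodule.span ℚ {of ℚ i} := by
  match n with
  | 0 => exact zero_mem _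
  | 1 => exact Submodule.subset_span rfl
  | (k+2) =>
      have hz : ∀ k : ℕ, dW (List.replicate (k+2) i) = (0 : FreeLieAlgebra ℚ X) := by
        intro k
        induction k with
        | zero => exact lie_self _
        | succ k ih =>
            have : List.replicate (k+1+2) i = i :: List.replicate (k+2) i := rfl
            rw [this, dW_cons _ (by simp), ih, lie_zero]
      rw [hz]
      exact zero_mem _

lemma DD_mem_span (i : X) {a : MonoidAlgebra ℚ (FreeMonoid X)}
    (hc : a * Xi i = Xi i * a) :
    DD a ∈ Submodule.span ℚ {of ℚ i} := by
  have hDa : DD a = ∑ w ∈ a.coeff.support, a.coeff w • dW (FreeMonoid.toList w) :=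
    Finsupp.linearCombination_apply (v := fun w : FreeMonoid X => dW (FreeMonoid.toList w)) ℚ a.coeff
  rw [hDa]
  apply Submodule.sum_mem
  intro w hw
  have hw0 : a.coeff w ≠ 0 := Finsupp.mem_support_iff.mp hw
  have hrep := support_replicate hc hw0
  apply Submodule.smul_mem
  have ht := congrArg FreeMonoid.toList hrep
  rw [ht]
  exact dW_replicate_mem i _

lemma vand {M : Type*} [AddCommGroup M] [Module ℚ M] (s : Finset ℕ) (v : ℕ → M)
    (h : ∀ t : ℚ, ∑ n ∈ s, t ^ (n+1) • v n = 0) : ∀ n ∈ s, v n = 0 := by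
  intro n hn
  rw [← Module.forall_dual_apply_eq_zero_iff ℚ]
  intro f
  set p : Polynomial ℚ := ∑ k ∈ s, Polynomial.C (f (v k)) * Polynomial.X ^ (k+1) with hp
  have hev : ∀ t : ℚ, p.eval t = 0 := by
    intro t
    have h2 := congrArg f (h t)
    rw [map_sum, map_zero] at h2
    rw [hp]
    rw [Polynomial.eval_finset_sum]
    rw [← h2]
    apply Finset.sum_congr rfl
    intro k _
    rw [Polynomial.eval_mul, Polynomial.eval_C, Polynomial.eval_pow, Polynomial.eval_X,
      map_smul, smul_eq_mul, mul_comm]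
  have hp0 : p = 0 := Polynomial.zero_of_eval_zero p hev
  have hcoeff := congrArg (fun q => Polynomial.coeff q (n+1)) hp0
  simp only [hp, Polynomial.finset_sum_coeff, Polynomial.coeff_C_mul,
    Polynomial.coeff_X_pow, Polynomial.coeff_zero] at hcoeff
  have hterm : ∀ k ∈ s, f (v k) * (if n+1 = k+1 then (1:ℚ) else 0)
      = if k = n then f (v k) else 0 := by
    intro k _
    rcases eq_or_ne k n with rfl | hk
    · simp
    · rw [if_neg (by omega), if_neg hk, mul_zero]
  rw [Finset.sum_congr rfl hterm, Finset.sum_ite_eq' s n (fun k => f (v k)), if_pos hn] at hcoeff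
  exact hcoeff

theorem main_hard {X : Type*} (i : X) (e : FreeLieAlgebra ℚ X)
    (h : ⁅e, FreeLieAlgebra.of ℚ i⁆ = 0) : ∃ c : ℚ, e = c • FreeLieAlgebra.of ℚ i := by
  classical
  obtain ⟨c, hc⟩ := Finsupp.mem_span_range_iff_exists_finsupp.mp (mem_span_mu e)
  set N := c.support.sup FreeMagma.length with hN
  set E : ℕ → FreeLieAlgebra ℚ X :=
    fun n => ∑ m ∈ c.support.filter (fun m => m.length = n), c m • mu m with hE
  have he : e = ∑ n ∈ Finset.range (N+1), E n := by
    simp only [hE]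
    rw [← hc, Finsupp.sum]
    exact (Finset.sum_fiberwise_of_maps_to
      (fun m hm => Finset.mem_range.mpr (Nat.lt_succ_of_le (Finset.le_sup hm)))
      (fun m => c m • mu m)).symm
  have hal : ∀ (t : ℚ) (n : ℕ), al t (E n) = t ^ n • E n := by
    intro t n
    simp only [hE]
    rw [lieHom_map_sum, Finset.smul_sum]
    apply Finset.sum_congr rfl
    intro m hm
    rw [Finset.mem_filter] at hm
    rw [map_smul, al_mu, hm.2, smul_comm]
  have hb : ∀ t : ℚ, ∑ n ∈ Finset.range (N+1), t ^ (n+1) • ⁅E n, of ℚ i⁆ = 0 := by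
    intro t
    have h0 : al t ⁅e, of ℚ i⁆ = 0 := by rw [h, map_zero]
    rw [LieHom.map_lie, he, lieHom_map_sum,
      show al t (of ℚ i) = t • of ℚ i from FreeLieAlgebra.lift_of_apply _ i,
      sum_lie'] at h0
    rw [← h0]
    apply Finset.sum_congr rfl
    intro n _
    rw [hal, smul_lie, lie_smul, smul_smul, ← pow_succ]
  have hcom : ∀ n ∈ Finset.range (N+1), ⁅E n, of ℚ i⁆ = 0 :=
    vand _ _ hb
  have hmem : ∀ n ∈ Finset.range (N+1), E n ∈ Submodule.span ℚ {of ℚ i} := by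
    intro n hn
    rcases Nat.eq_zero_or_pos n with rfl | hnpos
    · have hE0 : E 0 = 0 := by
        simp only [hE]
        apply Finset.sum_eq_zero
        intro m hm
        rw [Finset.mem_filter] at hm
        exact absurd hm.2 m.length_pos.ne'
      rw [hE0]
      exact zero_mem _
    · have hphc : ph (E n) * Xi i = Xi i * ph (E n) := by
        have h2 := congrArg ph (hcom n hn)
        rw [LieHom.map_lie, map_zero, ph_of, Ring.lie_def] at h2
        exact sub_eq_zero.mp h2
      have hD := DD_mem_span i hphc
      have hDE : DD (ph (E n)) = (n:ℚ) • E n := by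
        simp only [hE]
        rw [lieHom_map_sum, map_sum, Finset.smul_sum]
        apply Finset.sum_congr rfl
        intro m hm
        rw [Finset.mem_filter] at hm
        rw [map_smul, map_smul, DD_ph_mu, hm.2, smul_comm]
      rw [hDE] at hD
      have hinv : E n = (n:ℚ)⁻¹ • ((n:ℚ) • E n) := by
        rw [smul_smul, inv_mul_cancel₀ (Nat.cast_ne_zero.mpr hnpos.ne'), one_smul]
      rw [hinv]
      exact Submodule.smul_mem _ _ hD
  have hesp : e ∈ Submodule.span ℚ {of ℚ i} := he ▸ Submodule.sum_mem _ hmem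
  obtain ⟨cc, hcc⟩ := Submodule.mem_span_singleton.mp hesp
  exact ⟨cc, hcc.symm⟩

end FLAaux


/-- In the free Lie algebra over `ℚ` on a type `X`, an element `e` commutes with a
generator `x_i` (i.e. `⁅e, x_i⁆ = 0`) if and only if `e` is a scalar multiple of `x_i`. -/
theorem freeLieAlgebra_centralizer_of_generator {X : Type*} (i : X)
    (e : FreeLieAlgebra ℚ X) :
    ⁅e, FreeLieAlgebra.of ℚ i⁆ = 0 ↔ ∃ c : ℚ, e = c • FreeLieAlgebra.of ℚ i := by
  constructor
  · exact FLAaux.main_hard i e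
  · rintro ⟨c, rfl⟩
    rw [smul_lie, lie_self, smul_zero]
end
end

section
/- The free group on any set of generators is residually nilpotent: the intersection of all the terms of its lower central series is the trivial subgroup, ⋂_{n≥1} Γ_n F = {1} for F a free group. (Equivalently, the Campbell–Hausdorff representation ρ of the free group, and more generally any expansion of the free group into formal power series sending each generator x_i to 1 + X_i + higher-order terms, is injective.) -/
namespace MagnusAux

variable {α : Type*} [DecidableEq α] (n : ℕ)

set_option linter.unusedSectionVars false

open scoped commutatorElement

/-- Truncated noncommutative "power series" module: formal ℤ-combinations of words of
length < n. -/
abbrev V (α : Type*) (n : ℕ) := {w : List α // w.length < n} →₀ ℤ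

abbrev E (α : Type*) (n : ℕ) := Module.End ℤ (V α n)

/-- basis vector -/
noncomputable def bv (w : List α) (h : w.length < n) : V α n := Finsupp.single ⟨w, h⟩ 1

/-- left multiplication by the variable X_a, truncating at length n -/
noncomputable def X (a : α) : E α n :=
  Finsupp.lsum ℤ fun w => LinearMap.toSpanSingleton ℤ _
    (if h : (a :: w.1).length < n then bv n (a :: w.1) h else 0)

lemma X_apply_single (a : α) (w : List α) (h : w.length < n) (c : ℤ) :
    X n a (Finsupp.single ⟨w, h⟩ c) =
      if h2 : (a :: w).length < n then Finsupp.single ⟨a :: w, h2⟩ c else 0 := by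
  rw [X, Finsupp.lsum_single, LinearMap.toSpanSingleton_apply]
  split_ifs with h2
  · simp [bv, Finsupp.smul_single]
  · simp

/-- left multiplication by a word -/
noncomputable def XW (w : List α) : E α n := (w.map (X n)).prod

@[simp] lemma XW_nil : XW n ([] : List α) = 1 := by simp [XW]

lemma XW_cons (a : α) (w : List α) : XW n (a :: w) = X n a * XW n w := by
  simp [XW]

lemma XW_append (w w' : List α) : XW n (w ++ w') = XW n w * XW n w' := by
  simp [XW]

lemma XW_apply_single (w u : List α) (h : u.length < n) (c : ℤ) :
    XW n w (Finsupp.single ⟨u, h⟩ c) =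
      if h2 : (w ++ u).length < n then Finsupp.single ⟨w ++ u, h2⟩ c else 0 := by
  induction w with
  | nil => rw [XW_nil, Module.End.one_apply, List.nil_append, dif_pos h]
  | cons a w ih =>
    rw [XW_cons, Module.End.mul_apply, ih]
    by_cases h2 : (w ++ u).length < n
    · rw [dif_pos h2, X_apply_single]
      rfl
    · rw [dif_neg h2, map_zero, dif_neg]
      simp only [List.length_append, List.length_cons] at h2 ⊢
      omega

lemma coeff_XW (w u : List α) (h : u.length < n) (v : V α n) :
    XW n w v ⟨u, h⟩ =
      if hp : w <+: u then v ⟨u.drop w.length, lt_of_le_of_lt (by simpa using List.length_drop_le w.length u) h⟩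
      else 0 := by
  induction v using Finsupp.induction_linear with
  | zero => simp
  | add f g hf hg => rw [map_add, Finsupp.add_apply, hf, hg]; split_ifs <;> simp
  | single p c =>
    obtain ⟨p, hp⟩ := p
    rw [XW_apply_single]
    by_cases h2 : (w ++ p).length < n
    · rw [dif_pos h2, Finsupp.single_apply]
      by_cases he : w ++ p = u
      · subst he
        rw [if_pos (by exact Subtype.ext rfl), dif_pos (List.prefix_append w p)]
        rw [Finsupp.single_apply, if_pos]
        exact Subtype.ext (by simp)
      · rw [if_neg (fun hc => he (by injection hc))]
        split_ifs with h3
        · rw [Finsupp.single_apply, if_neg]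
          intro hc
          apply he
          injection hc with hc
          obtain ⟨t, rfl⟩ := h3
          simp at hc
          rw [← hc]
        · rfl
    · rw [dif_neg h2]
      split_ifs with h3
      · rw [Finsupp.single_apply, if_neg, Finsupp.zero_apply]
        intro hc
        injection hc with hc
        apply h2
        obtain ⟨t, rfl⟩ := h3
        subst hc
        simp at h ⊢
        omega
      · simp

lemma Xpow_eq (a : α) (j : ℕ) : (X n a) ^ j = XW n (List.replicate j a) := by
  rw [XW, List.map_replicate, List.prod_replicate]

lemma XW_zero (w : List α) (hw : n ≤ w.length) : XW n w = 0 := by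
  apply Finsupp.lhom_ext
  rintro ⟨u, hu⟩ c
  rw [XW_apply_single, dif_neg, LinearMap.zero_apply]
  simp only [List.length_append]
  omega

lemma Xpow_n (a : α) : (X n a) ^ n = 0 := by
  rw [Xpow_eq, XW_zero]
  simp

/-- abstract geometric-series inverse lemmas -/
lemma geom_inv_right {R : Type*} [Ring R] {x : R} (hx : x ^ n = 0) :
    (1 + x) * (∑ j ∈ Finset.range n, (-x) ^ j) = 1 := by
  have h2 : (-x) ^ n = 0 := by
    rw [neg_pow, hx, mul_zero]
  have h1 := mul_geom_sum (-x) n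
  rw [h2] at h1
  have : (1 + x) * (∑ j ∈ Finset.range n, (-x) ^ j)
      = -((-x - 1) * ∑ j ∈ Finset.range n, (-x) ^ j) := by noncomm_ring
  rw [this, h1]
  norm_num

lemma geom_inv_left {R : Type*} [Ring R] {x : R} (hx : x ^ n = 0) :
    (∑ j ∈ Finset.range n, (-x) ^ j) * (1 + x) = 1 := by
  have h2 : (-x) ^ n = 0 := by
    rw [neg_pow, hx, mul_zero]
  have h1 := geom_sum_mul (-x) n
  rw [h2] at h1
  have : (∑ j ∈ Finset.range n, (-x) ^ j) * (1 + x)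
      = -((∑ j ∈ Finset.range n, (-x) ^ j) * (-x - 1)) := by noncomm_ring
  rw [this, h1]
  norm_num

/-- geometric series for X a -/
noncomputable def geo (a : α) : E α n := ∑ j ∈ Finset.range n, (-(X n a)) ^ j

/-- the Magnus unit 1 + X_a -/
noncomputable def un (a : α) : (E α n)ˣ :=
  ⟨1 + X n a, geo n a, geom_inv_right n (Xpow_n n a), geom_inv_left n (Xpow_n n a)⟩

@[simp] lemma un_val (a : α) : ((un n a : (E α n)ˣ) : E α n) = 1 + X n a := rfl

@[simp] lemma un_inv_val (a : α) : ((un n a)⁻¹ : (E α n)ˣ) = (geo n a : E α n) := rfl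

/-- the Magnus homomorphism -/
noncomputable def mu : FreeGroup α →* (E α n)ˣ := FreeGroup.lift (fun a => un n a)

/-- the filtration by "order ≥ k" submodules -/
noncomputable def Jk (k : ℕ) : Submodule ℤ (E α n) :=
  Submodule.span ℤ {x | ∃ w : List α, k ≤ w.length ∧ x = XW n w}

variable (α)

lemma Jk_antitone {k l : ℕ} (hkl : k ≤ l) : (Jk n l : Submodule ℤ (E α n)) ≤ Jk n k :=
  Submodule.span_mono (fun x ⟨w, hw, he⟩ => ⟨w, le_trans hkl hw, he⟩)

lemma neg_pow_mem {k j : ℕ} {x : E α n} (hx : x ^ j ∈ Jk n k) : (-x) ^ j ∈ Jk n k := by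
  rcases Nat.even_or_odd j with he | ho
  · rwa [he.neg_pow]
  · rw [ho.neg_pow]
    exact Submodule.neg_mem _ hx

lemma Jk_mul {k l : ℕ} {x y : E α n} (hx : x ∈ Jk n k) (hy : y ∈ Jk n l) :
    x * y ∈ Jk n (k + l) := by
  have h : (Jk n k : Submodule ℤ (E α n)) * Jk n l ≤ Jk n (k + l) := by
    rw [Jk, Jk, Submodule.span_mul_span]
    apply Submodule.span_le.2
    rintro z ⟨x, ⟨w, hw, rfl⟩, y, ⟨w', hw', rfl⟩, rfl⟩
    apply Submodule.subset_span
    refine ⟨w ++ w', ?_, (XW_append n w w').symm⟩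
    rw [List.length_append]
    omega
  exact h (Submodule.mul_mem_mul hx hy)

lemma Jk_pow {k j : ℕ} (hj : 1 ≤ j) {x : E α n} (hx : x ∈ Jk n k) :
    x ^ j ∈ (Jk n k : Submodule ℤ (E α n)) := by
  induction j with
  | zero => omega
  | succ j ih =>
    rcases Nat.lt_or_ge j 1 with hj1 | hj2
    · interval_cases j
      simpa using hx
    · have := Jk_mul α n (ih hj2) hx
      rw [← pow_succ] at this
      exact Jk_antitone α n (by omega) this

lemma Jk_top (hn : 1 ≤ n) {k : ℕ} (hk : n ≤ k) : (Jk n k : Submodule ℤ (E α n)) = ⊥ := by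
  rw [eq_bot_iff, Jk]
  apply Submodule.span_le.2
  rintro x ⟨w, hw, rfl⟩
  simp [XW_zero n w (by omega)]

lemma Jk_pow_one {j : ℕ} (hj : 1 ≤ j) {x : E α n} (hx : x ∈ Jk n 1) :
    x ^ j ∈ (Jk n j : Submodule ℤ (E α n)) := by
  induction j with
  | zero => omega
  | succ j ih =>
    rcases Nat.lt_or_ge j 1 with hj1 | hj2
    · interval_cases j
      simpa using hx
    · have := Jk_mul α n (ih hj2) hx
      rwa [← pow_succ] at this

lemma pow_n_eq_zero (hn : 1 ≤ n) {x : E α n} (hx : x ∈ Jk n 1) : x ^ n = 0 := by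
  have := Jk_pow_one α n hn hx
  rw [Jk_top α n hn le_rfl] at this
  rwa [Submodule.mem_bot] at this

/-- coercion of the inverse of a unit congruent to 1 mod Jk -/
lemma inv_sub_one_mem (hn : 1 ≤ n) {k : ℕ} (hk : 1 ≤ k) {u : (E α n)ˣ}
    (hu : (u : E α n) - 1 ∈ Jk n k) : ((u⁻¹ : (E α n)ˣ) : E α n) - 1 ∈ Jk n k := by
  set x := (u : E α n) - 1 with hx
  have hx1 : x ∈ Jk n 1 := Jk_antitone α n hk hu
  have hxn : x ^ n = 0 := pow_n_eq_zero α n hn hx1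
  have hinv : ((u⁻¹ : (E α n)ˣ) : E α n) = ∑ j ∈ Finset.range n, (-x) ^ j := by
    apply Units.inv_eq_of_mul_eq_one_right
    have h1 : (u : E α n) = 1 + x := by rw [hx]; abel
    rw [h1]
    exact geom_inv_right n hxn
  rw [hinv, Finset.range_eq_Ico, Finset.sum_eq_sum_Ico_succ_bot hn]
  simp only [pow_zero]
  rw [add_sub_cancel_left]
  apply Submodule.sum_mem
  intro j hj
  rw [Finset.mem_Ico] at hj
  exact neg_pow_mem α n (Jk_pow α n (by omega) hu)

/-- subgroup of units congruent to 1 modulo Jk (k+1) -/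
noncomputable def H (hn : 1 ≤ n) (k : ℕ) : Subgroup (E α n)ˣ where
  carrier := {u | (u : E α n) - 1 ∈ Jk n (k + 1)}
  one_mem' := by
    simp only [Set.mem_setOf_eq, Units.val_one, sub_self]
    exact Submodule.zero_mem _
  mul_mem' := by
    intro u v hu hv
    simp only [Set.mem_setOf_eq, Units.val_mul] at hu hv ⊢
    have key : (u : E α n) * v - 1 = ((u : E α n) - 1) * ((v : E α n) - 1)
        + ((u : E α n) - 1) + ((v : E α n) - 1) := by noncomm_ring
    rw [key]
    apply Submodule.add_mem _ (Submodule.add_mem _ ?_ hu) hv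
    exact Jk_antitone α n (by omega) (Jk_mul α n hu hv)
  inv_mem' := by
    intro u hu
    exact inv_sub_one_mem α n hn (by omega) hu

lemma mem_H_iff (hn : 1 ≤ n) (k : ℕ) (u : (E α n)ˣ) :
    u ∈ H α n hn k ↔ (u : E α n) - 1 ∈ Jk n (k + 1) := Iff.rfl

lemma commutator_mem_H (hn : 1 ≤ n) {k l : ℕ} {u v : (E α n)ˣ}
    (hu : u ∈ H α n hn k) (hv : v ∈ H α n hn l) : ⁅u, v⁆ ∈ H α n hn (k + l + 1) := by
  rw [mem_H_iff] at hu hv ⊢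
  set a := (u : E α n)
  set b := (v : E α n)
  set a' := ((u⁻¹ : (E α n)ˣ) : E α n)
  set b' := ((v⁻¹ : (E α n)ˣ) : E α n)
  have haa' : a * a' = 1 := u.mul_inv
  have hbb' : b * b' = 1 := v.mul_inv
  have hcval : ((⁅u, v⁆ : (E α n)ˣ) : E α n) = a * b * a' * b' := by
    rw [commutatorElement_def]
    push_cast
    rfl
  have e1 : b * a * (a' * b') = 1 := by
    have h : b * a * (a' * b') = b * (a * a') * b' := by noncomm_ring
    rw [h, haa', mul_one, hbb']
  have key : a * b * a' * b' - 1 = (a * b - b * a) * (a' * b') := by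
    rw [sub_mul, e1, mul_assoc]
  have hz : a * b - b * a ∈ Jk n (k + l + 2) := by
    have : a * b - b * a = (a - 1) * (b - 1) - (b - 1) * (a - 1) := by noncomm_ring
    rw [this]
    apply Submodule.sub_mem
    · have := Jk_mul α n hu hv
      rwa [(by omega : k + 1 + (l + 1) = k + l + 2)] at this
    · have := Jk_mul α n hv hu
      rwa [(by omega : l + 1 + (k + 1) = k + l + 2)] at this
  have hu' : a' - 1 ∈ Jk n 1 :=
    Jk_antitone α n (by omega) (inv_sub_one_mem α n hn (by omega) hu)
  have hv' : b' - 1 ∈ Jk n 1 :=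
    Jk_antitone α n (by omega) (inv_sub_one_mem α n hn (by omega) hv)
  rw [hcval, key]
  have expand : (a * b - b * a) * (a' * b') =
      (a * b - b * a) * ((a' - 1) * (b' - 1)) + (a * b - b * a) * (a' - 1)
      + (a * b - b * a) * (b' - 1) + (a * b - b * a) := by noncomm_ring
  rw [expand]
  have m1 : (a * b - b * a) * ((a' - 1) * (b' - 1)) ∈ Jk n (k + l + 2) :=
    Jk_antitone α n (by omega) (Jk_mul α n hz (Jk_mul α n hu' hv'))
  have m2 : (a * b - b * a) * (a' - 1) ∈ Jk n (k + l + 2) :=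
    Jk_antitone α n (by omega) (Jk_mul α n hz hu')
  have m3 : (a * b - b * a) * (b' - 1) ∈ Jk n (k + l + 2) :=
    Jk_antitone α n (by omega) (Jk_mul α n hz hv')
  have : k + l + 2 = (k + l + 1) + 1 := by omega
  rw [this] at m1 m2 m3 hz
  exact Submodule.add_mem _ (Submodule.add_mem _ (Submodule.add_mem _ m1 m2) m3) hz

lemma mu_mem_H0 (hn : 1 ≤ n) (g : FreeGroup α) : mu n g ∈ H α n hn 0 := by
  induction g using FreeGroup.induction_on with
  | C1 =>
    rw [map_one]
    exact Subgroup.one_mem _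
  | of a =>
    rw [mem_H_iff]
    have hof : ((mu n (FreeGroup.of a) : (E α n)ˣ) : E α n) = 1 + X n a := by
      rw [mu, FreeGroup.lift_apply_of, un_val]
    show ((mu n (FreeGroup.of a) : (E α n)ˣ) : E α n) - 1 ∈ _
    rw [hof, add_sub_cancel_left]
    apply Submodule.subset_span
    exact ⟨[a], by simp, by rw [XW_cons, XW_nil, mul_one]⟩
  | inv_of a ih =>
    rw [map_inv]
    exact Subgroup.inv_mem _ ih
  | mul g h ihg ihh =>
    rw [map_mul]
    exact Subgroup.mul_mem _ ihg ihh

lemma mu_lcs_mem (hn : 1 ≤ n) (k : ℕ) (g : FreeGroup α)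
    (hg : g ∈ (⊤ : Subgroup (FreeGroup α)).lowerCentralSeries k) : mu n g ∈ H α n hn k := by
  induction k generalizing g with
  | zero => exact mu_mem_H0 α n hn g
  | succ k ih =>
    have hle : (⊤ : Subgroup (FreeGroup α)).lowerCentralSeries (k + 1) ≤ (H α n hn (k + 1)).comap (mu n) := by
      rw [lowerCentralSeries_succ]
      apply Subgroup.commutator_le.2
      intro p hp q hq
      rw [Subgroup.mem_comap, map_commutatorElement]
      have := commutator_mem_H α n hn (ih p hp) (mu_mem_H0 α n hn q)
      rwa [(by omega : k + 0 + 1 = k + 1)] at this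
    exact hle hg

/-- Part 1: elements of the whole lower central series intersection map to 1. -/
lemma mu_eq_one (hn : 1 ≤ n) (g : FreeGroup α)
    (hg : g ∈ ⨅ k : ℕ, (⊤ : Subgroup (FreeGroup α)).lowerCentralSeries k) : mu n g = 1 := by
  have h1 : mu n g ∈ H α n hn n := mu_lcs_mem α n hn n g (Subgroup.mem_iInf.1 hg n)
  rw [mem_H_iff] at h1
  have h2 := Jk_antitone α n (by omega : n ≤ n + 1) h1
  rw [Jk_top α n hn le_rfl, Submodule.mem_bot, sub_eq_zero] at h2
  exact Units.ext (by rw [h2, Units.val_one])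

/-! ### Part 2: injectivity on a given reduced word -/

variable {α}

/-- number of blocks (maximal constant runs) of a list -/
def B : List α → ℕ
  | [] => 0
  | a :: t => match t with
    | [] => 1
    | b :: t' => (if a = b then 0 else 1) + B (b :: t')

@[simp] lemma B_nil : B ([] : List α) = 0 := rfl
@[simp] lemma B_singleton (a : α) : B [a] = 1 := rfl

lemma B_cons_cons (a b : α) (t : List α) :
    B (a :: b :: t) = (if a = b then 0 else 1) + B (b :: t) := rfl

lemma B_le_cons (a : α) (w : List α) : B w ≤ B (a :: w) := by
  cases w with
  | nil => simp
  | cons b t => rw [B_cons_cons]; split_ifs <;> omega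

lemma B_cons_le (a : α) (w : List α) : B (a :: w) ≤ B w + 1 := by
  cases w with
  | nil => simp
  | cons b t => rw [B_cons_cons]; split_ifs <;> omega

lemma B_cons_same (a : α) (w : List α) : B (a :: a :: w) = B (a :: w) := by
  rw [B_cons_cons, if_pos rfl, zero_add]

lemma B_rep_append (a : α) (s : ℕ) (w : List α) :
    B (List.replicate (s + 1) a ++ w) = B (a :: w) := by
  induction s with
  | zero => rw [List.replicate_one, List.singleton_append]
  | succ s ih =>
    have e : List.replicate (s + 1 + 1) a ++ w = a :: a :: (List.replicate s a ++ w) := by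
      simp [List.replicate_succ]
    have e2 : List.replicate (s + 1) a ++ w = a :: (List.replicate s a ++ w) := by
      simp [List.replicate_succ]
    rw [e, B_cons_same, ← e2, ih]

lemma B_cons_head_ne (a : α) (w : List α) (hw : ∀ c ∈ w.head?, c ≠ a) :
    B (a :: w) = B w + 1 := by
  cases w with
  | nil => simp
  | cons b t =>
    rw [B_cons_cons, if_neg, add_comm]
    intro h
    exact hw b rfl h.symm

/-- the sign of a word: (-1)^(number of inverse letters) -/
def sg (L : List (α × Bool)) : ℤ := (-1) ^ (L.countP fun x => x.2 = false)

@[simp] lemma sg_nil : sg ([] : List (α × Bool)) = 1 := rfl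

lemma sg_cons (a : α) (b : Bool) (t : List (α × Bool)) :
    sg ((a, b) :: t) = (cond b 1 (-1)) * sg t := by
  rw [sg, sg, List.countP_cons]
  cases b <;> simp [pow_add]

lemma sg_sq (L : List (α × Bool)) : sg L * sg L = 1 := by
  rw [sg, ← pow_add, ← two_mul, pow_mul]
  norm_num

lemma sg_rep_append (a : α) (b : Bool) (r : ℕ) (t : List (α × Bool)) :
    sg (List.replicate r (a, b) ++ t) = (cond b 1 (-1)) ^ r * sg t := by
  induction r with
  | zero => simp
  | succ r ih =>
    rw [List.replicate_succ, List.cons_append, sg_cons, ih, pow_succ]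
    ring

/-- first-run decomposition of a reduced word -/
lemma run_decomp (x : α × Bool) (t : List (α × Bool))
    (hred : (x :: t).Chain' (fun p q => p.1 = q.1 → p.2 = q.2)) :
    ∃ r t', 0 < r ∧ x :: t = List.replicate r x ++ t' ∧
      (∀ y ∈ t'.head?, y.1 ≠ x.1) ∧
      t'.Chain' (fun p q => p.1 = q.1 → p.2 = q.2) := by
  induction t generalizing x with
  | nil => exact ⟨1, [], by simp, by simp, by simp, List.isChain_nil⟩
  | cons y t ih =>
    have hred' : (y :: t).Chain' (fun p q => p.1 = q.1 → p.2 = q.2) :=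
      hred.tail
    by_cases hxy : y.1 = x.1
    · have hx : y = x := by
        have := (List.isChain_cons_cons.1 hred).1 hxy.symm
        ext
        · exact hxy
        · exact this.symm
      subst hx
      obtain ⟨r, t', hr, he, hh, hc⟩ := ih y hred'
      refine ⟨r + 1, t', by omega, ?_, hh, hc⟩
      rw [List.replicate_succ, List.cons_append, ← he]
    · exact ⟨1, y :: t, by simp, by simp, by simpa using fun h => absurd h hxy,
        hred'⟩

/-- the factor endomorphism of a single letter -/
noncomputable def Fe (x : α × Bool) : E α n := cond x.2 (1 + X n x.1) (geo n x.1)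

/-- the vector obtained by applying the word's factors to the empty-word basis vector -/
noncomputable def vL (hn : 0 < n) (L : List (α × Bool)) : V α n :=
  ((L.map (Fe n)).prod) (bv n [] (by simpa using hn))

lemma vL_nil (hn : 0 < n) : vL n hn ([] : List (α × Bool)) = bv n [] (by simpa using hn) := by
  rw [vL, List.map_nil, List.prod_nil, Module.End.one_apply]

lemma vL_cons (hn : 0 < n) (x : α × Bool) (L : List (α × Bool)) :
    vL n hn (x :: L) = Fe n x (vL n hn L) := by
  rw [vL, vL, List.map_cons, List.prod_cons, Module.End.mul_apply]

lemma length_rep_append (a : α) (s : ℕ) (p : List α) :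
    (List.replicate s a ++ p).length = s + p.length := by simp

lemma rep_prefix_iff {a : α} {j s : ℕ} {p : List α} (hp : ∀ c ∈ p.head?, c ≠ a) :
    List.replicate j a <+: List.replicate s a ++ p ↔ j ≤ s := by
  constructor
  · intro hpre
    by_contra hj
    push_neg at hj
    have htake := List.prefix_iff_eq_take.1 hpre
    have hel := congrArg (fun l => l[s]?) htake
    simp only [List.getElem?_take, List.length_replicate] at hel
    rw [List.getElem?_replicate] at hel
    rw [List.getElem?_append_right (by simp)] at hel
    simp only [List.length_replicate, Nat.sub_self, hj, if_true] at hel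
    rw [← List.head?_eq_getElem?] at hel
    cases hh : p.head? with
    | none => rw [hh] at hel; exact absurd hel (by simp)
    | some c =>
      rw [hh] at hel
      exact hp c hh (Option.some.inj hel).symm
  · intro hj
    refine ⟨List.replicate (s - j) a ++ p, ?_⟩
    rw [← List.append_assoc, ← List.replicate_add]
    congr 2
    omega

lemma rep_drop (a : α) {j s : ℕ} (hj : j ≤ s) (p : List α) :
    (List.replicate s a ++ p).drop j = List.replicate (s - j) a ++ p := by
  rw [List.drop_append_of_le_length (by simpa using hj), List.drop_replicate]

lemma coeff_Xpow_run (a : α) (j s : ℕ) (p : List α) (hp : ∀ c ∈ p.head?, c ≠ a)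
    (h : (List.replicate s a ++ p).length < n) (v : V α n) :
    ((X n a ^ j) v) ⟨List.replicate s a ++ p, h⟩ =
      if hjs : j ≤ s then
        v ⟨List.replicate (s - j) a ++ p, by rw [length_rep_append] at h ⊢; omega⟩
      else 0 := by
  rw [Xpow_eq, coeff_XW]
  by_cases h2 : j ≤ s
  · rw [dif_pos ((rep_prefix_iff hp).2 h2), dif_pos h2]
    congr 1
    apply Subtype.ext
    show List.drop _ _ = _
    rw [List.length_replicate]
    exact rep_drop a h2 p
  · rw [dif_neg (fun hc => h2 ((rep_prefix_iff hp).1 hc)), dif_neg h2]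

lemma coeff_geo_run (a : α) (s : ℕ) (p : List α) (hp : ∀ c ∈ p.head?, c ≠ a)
    (h : (List.replicate s a ++ p).length < n) (v : V α n) :
    (geo n a v) ⟨List.replicate s a ++ p, h⟩ =
      ∑ j ∈ Finset.range (s + 1), (-1 : ℤ) ^ j *
        v ⟨List.replicate (s - j) a ++ p, by rw [length_rep_append] at h ⊢; omega⟩ := by
  have hsn : s < n := by rw [length_rep_append] at h; omega
  rw [geo, LinearMap.sum_apply, Finsupp.finset_sum_apply]
  have hterm : ∀ j, (((-X n a) ^ j) v) ⟨List.replicate s a ++ p, h⟩ =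
      (-1 : ℤ) ^ j * (((X n a ^ j)) v) ⟨List.replicate s a ++ p, h⟩ := by
    intro j
    rcases Nat.even_or_odd j with he | ho
    · rw [he.neg_pow, he.neg_one_pow, one_mul]
    · rw [ho.neg_pow, ho.neg_one_pow, LinearMap.neg_apply, Finsupp.neg_apply, neg_one_mul]
  rw [Finset.sum_congr rfl (fun j _ => hterm j)]
  rw [← Finset.sum_subset (Finset.range_subset_range.2 hsn)]
  · apply Finset.sum_congr rfl
    intro j hj
    rw [Finset.mem_range] at hj
    rw [coeff_Xpow_run n a j s p hp h v, dif_pos (by omega)]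
  · intro j _ hj
    rw [Finset.mem_range] at hj
    rw [coeff_Xpow_run n a j s p hp h v, dif_neg (by omega), mul_zero]

lemma coeff_tt (a : α) (s : ℕ) (p : List α) (hp : ∀ c ∈ p.head?, c ≠ a)
    (h : (List.replicate s a ++ p).length < n) (v : V α n) :
    (Fe n (a, true) v) ⟨List.replicate s a ++ p, h⟩ =
      (if hs1 : 1 ≤ s then
        v ⟨List.replicate (s - 1) a ++ p, by rw [length_rep_append] at h ⊢; omega⟩ else 0)
      + v ⟨List.replicate s a ++ p, h⟩ := by
  have he : Fe n (a, true) = (X n a) ^ 1 + (X n a) ^ 0 := by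
    rw [Fe, pow_one, pow_zero]
    show 1 + X n a = _
    abel
  rw [he, LinearMap.add_apply, Finsupp.add_apply,
    coeff_Xpow_run n a 1 s p hp h v, coeff_Xpow_run n a 0 s p hp h v, dif_pos (Nat.zero_le s)]
  rfl

lemma supp_Xpow (a : α) (j : ℕ) (u : List α) (h : u.length < n) (v : V α n)
    (hne : ((X n a ^ j) v) ⟨u, h⟩ ≠ 0) :
    ∃ (u'' : List α) (h'' : u''.length < n),
      u = List.replicate j a ++ u'' ∧ v ⟨u'', h''⟩ ≠ 0 := by
  rw [Xpow_eq, coeff_XW] at hne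
  split_ifs at hne with h1
  · refine ⟨u.drop (List.replicate j a).length, by rw [List.length_drop]; omega, ?_, hne⟩
    obtain ⟨t, ht⟩ := h1
    rw [← ht, List.drop_left]
  · exact absurd rfl hne

lemma supp_Fe (x : α × Bool) (v : V α n) (u : List α) (h : u.length < n)
    (hne : (Fe n x v) ⟨u, h⟩ ≠ 0) :
    ∃ (j : ℕ) (u'' : List α) (h'' : u''.length < n),
      u = List.replicate j x.1 ++ u'' ∧ v ⟨u'', h''⟩ ≠ 0 := by
  obtain ⟨a, b⟩ := x
  cases b with
  | true =>
    have he : (Fe n (a, true) v) ⟨u, h⟩ = ((X n a ^ 0) v) ⟨u, h⟩ + ((X n a ^ 1) v) ⟨u, h⟩ := by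
      rw [pow_zero, pow_one]
      show ((1 + X n a) v) ⟨u, h⟩ = _
      rw [LinearMap.add_apply, Finsupp.add_apply, Module.End.one_apply]
    rw [he] at hne
    by_cases h0 : ((X n a ^ 0) v) ⟨u, h⟩ = 0
    · rw [h0, zero_add] at hne
      obtain ⟨u'', h'', he', hv⟩ := supp_Xpow n a 1 u h v hne
      exact ⟨1, u'', h'', he', hv⟩
    · obtain ⟨u'', h'', he', hv⟩ := supp_Xpow n a 0 u h v h0
      exact ⟨0, u'', h'', he', hv⟩
  | false =>
    have hg : (Fe n (a, false) v) ⟨u, h⟩ = (geo n a v) ⟨u, h⟩ := rfl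
    rw [hg, geo, LinearMap.sum_apply, Finsupp.finset_sum_apply] at hne
    obtain ⟨j, _, hj⟩ := Finset.exists_ne_zero_of_sum_ne_zero hne
    have hj' : ((X n a ^ j) v) ⟨u, h⟩ ≠ 0 := by
      intro hc
      apply hj
      rcases Nat.even_or_odd j with hpar | hpar
      · rw [hpar.neg_pow, hc]
      · rw [hpar.neg_pow, LinearMap.neg_apply, Finsupp.neg_apply, hc, neg_zero]
    obtain ⟨u'', h'', he', hv⟩ := supp_Xpow n a j u h v hj'
    exact ⟨j, u'', h'', he', hv⟩

lemma B_rep_le (a : α) (j : ℕ) (w : List α) :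
    B (List.replicate j a ++ w) ≤ B (a :: w) := by
  cases j with
  | zero => exact B_le_cons a w
  | succ j => rw [B_rep_append]

lemma B_cons_rep (a : α) (j : ℕ) (w : List α) :
    B (a :: (List.replicate j a ++ w)) = B (a :: w) := by
  have e : a :: (List.replicate j a ++ w) = List.replicate (j + 1) a ++ w := by
    rw [List.replicate_succ, List.cons_append]
  rw [e, B_rep_append]

/-- first components -/
def mfst (L : List (α × Bool)) : List α := L.map Prod.fst

@[simp] lemma mfst_nil : mfst ([] : List (α × Bool)) = [] := rfl
@[simp] lemma mfst_cons (x : α × Bool) (L : List (α × Bool)) :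
    mfst (x :: L) = x.1 :: mfst L := rfl

lemma mfst_rep_append (a : α) (b : Bool) (r : ℕ) (t : List (α × Bool)) :
    mfst (List.replicate r (a, b) ++ t) = List.replicate r a ++ mfst t := by
  rw [mfst, List.map_append, List.map_replicate]
  rfl

lemma length_mfst (L : List (α × Bool)) : (mfst L).length = L.length := by
  rw [mfst, List.length_map]

lemma bv_coeff_ne (hn : 0 < n) (u : List α) (h : u.length < n)
    (hne : bv n [] (by simpa using hn) ⟨u, h⟩ ≠ 0) : u = [] := by
  rw [bv, Finsupp.single_apply] at hne
  split_ifs at hne with he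
  · exact (congrArg Subtype.val he).symm
  · exact absurd rfl hne

lemma coeff_congr {u u' : List α} (v : V α n) (h : u.length < n) (h' : u'.length < n)
    (he : u = u') : v ⟨u, h⟩ = v ⟨u', h'⟩ := by subst he; rfl

/-- reduced words -/
def Red (L : List (α × Bool)) : Prop := L.Chain' (fun p q => p.1 = q.1 → p.2 = q.2)

/-- The master induction: support control, positivity of the leading coefficient, and
the refined run invariant. -/
lemma master (hn : 0 < n) (L : List (α × Bool)) (hred : Red L) :
    (∀ (u : List α) (h : u.length < n), vL n hn L ⟨u, h⟩ ≠ 0 →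
        B u ≤ B (mfst L) ∧ ∀ x ∈ L.head?, B (x.1 :: u) ≤ B (mfst L))
    ∧ (∀ (h : (mfst L).length < n), 0 < sg L * vL n hn L ⟨mfst L, h⟩)
    ∧ (∀ (a : α) (b : Bool) (r : ℕ) (t : List (α × Bool)),
        L = List.replicate r (a, b) ++ t → 0 < r → (∀ y ∈ t.head?, y.1 ≠ a) →
        ∀ (s : ℕ) (h : (List.replicate s a ++ mfst t).length < n),
          (b = true → (s ≤ r → 0 < sg t * vL n hn L ⟨List.replicate s a ++ mfst t, h⟩)
            ∧ (r < s → vL n hn L ⟨List.replicate s a ++ mfst t, h⟩ = 0))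
          ∧ (b = false →
              0 < (-1 : ℤ) ^ s * sg t * vL n hn L ⟨List.replicate s a ++ mfst t, h⟩)) := by
  induction L with
  | nil =>
    refine ⟨?_, ?_, ?_⟩
    · intro u h hne
      rw [vL_nil] at hne
      have := bv_coeff_ne n hn u h hne
      subst this
      exact ⟨le_refl _, by simp⟩
    · intro h
      rw [vL_nil, sg_nil, one_mul, bv, Finsupp.single_apply]
      split_ifs with hc
      · norm_num
      · exact absurd (Subtype.ext rfl) hc
    · intro a b r t hL hr _
      exfalso
      have := congrArg List.length hL
      simp at this
      omega
  | cons x L' ih =>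
    have hred' : Red L' := hred.tail
    obtain ⟨ihS, ihM, ihU⟩ := ih hred'
    -- SUPPORT part
    have hSUP : ∀ (u : List α) (h : u.length < n), vL n hn (x :: L') ⟨u, h⟩ ≠ 0 →
        B u ≤ B (mfst (x :: L')) ∧ ∀ y ∈ (x :: L').head?, B (y.1 :: u) ≤ B (mfst (x :: L')) := by
      intro u h hne
      rw [vL_cons] at hne
      obtain ⟨j, u'', h'', rfl, hv⟩ := supp_Fe n x _ _ h hne
      have hC1 : B (x.1 :: u'') ≤ B (mfst (x :: L')) := by
        rw [mfst_cons]
        cases L' with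
        | nil =>
          rw [vL_nil] at hv
          have := bv_coeff_ne n hn u'' h'' hv
          subst this
          simp
        | cons y t =>
          by_cases hxy : x.1 = y.1
          · have h2 := (ihS u'' h'' hv).2 y rfl
            rw [← hxy] at h2
            exact le_trans h2 (B_le_cons _ _)
          · have h1 := (ihS u'' h'' hv).1
            have h3 : B (x.1 :: u'') ≤ B u'' + 1 := B_cons_le _ _
            have h4 : B (x.1 :: mfst (y :: t)) = B (mfst (y :: t)) + 1 := by
              apply B_cons_head_ne
              intro c hc
              rw [mfst_cons] at hc
              simp only [List.head?_cons, Option.mem_def, Option.some.injEq] at hc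
              rw [← hc]
              exact fun hcc => hxy hcc.symm
            omega
      constructor
      · exact le_trans (B_rep_le x.1 j u'') hC1
      · intro y hy
        simp only [List.head?_cons, Option.mem_def, Option.some.injEq] at hy
        subst hy
        rw [B_cons_rep]
        exact hC1
    -- RUN INVARIANT part
    have hU : ∀ (a : α) (b : Bool) (r : ℕ) (t : List (α × Bool)),
        x :: L' = List.replicate r (a, b) ++ t → 0 < r → (∀ y ∈ t.head?, y.1 ≠ a) →
        ∀ (s : ℕ) (h : (List.replicate s a ++ mfst t).length < n),
          (b = true → (s ≤ r → 0 < sg t * vL n hn (x :: L') ⟨List.replicate s a ++ mfst t, h⟩)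
            ∧ (r < s → vL n hn (x :: L') ⟨List.replicate s a ++ mfst t, h⟩ = 0))
          ∧ (b = false →
              0 < (-1 : ℤ) ^ s * sg t * vL n hn (x :: L')
                ⟨List.replicate s a ++ mfst t, h⟩) := by
      intro a b r t hL hr hhead s h
      cases r with
      | zero => omega
      | succ r' =>
      rw [List.replicate_succ, List.cons_append] at hL
      injection hL with hx hL'
      subst hx
      have hmap : ∀ c ∈ (mfst t).head?, c ≠ a := by
        intro c hc
        cases t with
        | nil => simp [mfst] at hc
        | cons y t'' =>
          simp only [mfst_cons, List.head?_cons, Option.mem_def, Option.some.injEq] at hc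
          subst hc
          exact hhead y rfl
      have hlen_t : (mfst t).length < n := by
        rw [length_rep_append] at h; omega
      rw [vL_cons]
      rcases Nat.eq_zero_or_pos r' with hr0 | hr0
      · -- r = 1 : the run is a single letter, L' = t
        subst hr0
        have hLt : L' = t := by simpa using hL'
        subst hLt
        have hz : ∀ (c : ℕ), 0 < c → ∀ (hc : (List.replicate c a ++ mfst L').length < n),
            vL n hn L' ⟨List.replicate c a ++ mfst L', hc⟩ = 0 := by
          intro c hc0 hcl
          by_contra hne
          have h1 := (ihS _ _ hne).1
          have h2 : B (List.replicate c a ++ mfst L') = B (mfst L') + 1 := by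
            cases c with
            | zero => omega
            | succ c' => rw [B_rep_append, B_cons_head_ne a _ hmap]
          omega
        constructor
        · intro hb; subst hb
          rw [coeff_tt n a s (mfst L') hmap h]
          constructor
          · intro hs1
            cases s with
            | zero =>
              rw [dif_neg (by omega), zero_add]
              exact ihM h
            | succ s'' =>
              have hs0 : s'' = 0 := by omega
              subst hs0
              rw [dif_pos (by omega), hz 1 (by omega) h, add_zero]
              exact ihM (by rw [length_rep_append] at h; omega)
          · intro hs2
            rw [dif_pos (by omega), hz (s - 1) (by omega), hz s (by omega), add_zero]
        · intro hb; subst hb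
          rw [show Fe n (a, false) = geo n a from rfl, coeff_geo_run n a s (mfst L') hmap h]
          rw [Finset.sum_eq_single s]
          · have hM := ihM hlen_t
            set M := vL n hn L' ⟨mfst L', hlen_t⟩ with hMdef
            have hcc : vL n hn L'
                ⟨List.replicate (s - s) a ++ mfst L', by rw [length_rep_append] at h ⊢; omega⟩
                = M := coeff_congr n _ _ _ (by simp)
            rw [hcc]
            have h1 : (-1 : ℤ) ^ s * (-1 : ℤ) ^ s = 1 := by
              rw [← pow_add]
              exact Even.neg_one_pow ⟨s, rfl⟩
            have h2 : (-1 : ℤ) ^ s * sg L' * ((-1 : ℤ) ^ s * M) = sg L' * M := by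
              linear_combination sg L' * M * h1
            rw [h2]
            exact hM
          · intro j hj hjs
            rw [Finset.mem_range] at hj
            rw [hz (s - j) (by omega), mul_zero]
          · intro hs
            exact absurd (Finset.self_mem_range_succ s) hs
      · -- r = r' + 1 with r' ≥ 1 : the run continues in L'
        have hU' := ihU a b r' t hL' hr0 hhead
        constructor
        · intro hb; subst hb
          rw [coeff_tt n a s (mfst t) hmap h]
          constructor
          · intro hs1
            cases s with
            | zero =>
              rw [dif_neg (by omega), zero_add]
              exact ((hU' 0 h).1 rfl).1 (by omega)
            | succ s'' =>
              rw [dif_pos (by omega)]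
              have h1len : (List.replicate (s'' + 1 - 1) a ++ mfst t).length < n := by
                rw [length_rep_append] at h ⊢; omega
              have ht1 : 0 < sg t * vL n hn L'
                  ⟨List.replicate (s'' + 1 - 1) a ++ mfst t, h1len⟩ :=
                ((hU' (s'' + 1 - 1) h1len).1 rfl).1 (by omega)
              by_cases hs2 : s'' + 1 ≤ r'
              · have ht2 : 0 < sg t * vL n hn L'
                    ⟨List.replicate (s'' + 1) a ++ mfst t, h⟩ :=
                  ((hU' (s'' + 1) h).1 rfl).1 hs2
                rw [mul_add]
                exact add_pos ht1 ht2
              · have ht2 : vL n hn L' ⟨List.replicate (s'' + 1) a ++ mfst t, h⟩ = 0 :=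
                  ((hU' (s'' + 1) h).1 rfl).2 (by omega)
                rw [ht2, add_zero]
                exact ht1
          · intro hs2
            have h1len : (List.replicate (s - 1) a ++ mfst t).length < n := by
              rw [length_rep_append] at h ⊢; omega
            have e1 : vL n hn L' ⟨List.replicate (s - 1) a ++ mfst t, h1len⟩ = 0 :=
              ((hU' (s - 1) h1len).1 rfl).2 (by omega)
            have e2 : vL n hn L' ⟨List.replicate s a ++ mfst t, h⟩ = 0 :=
              ((hU' s h).1 rfl).2 (by omega)
            rw [e2, add_zero]
            split_ifs with hd
            · exact e1
            · rfl
        · intro hb; subst hb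
          rw [show Fe n (a, false) = geo n a from rfl, coeff_geo_run n a s (mfst t) hmap h,
            Finset.mul_sum]
          apply Finset.sum_pos ?_ ⟨s, Finset.self_mem_range_succ s⟩
          intro j hj
          rw [Finset.mem_range] at hj
          have hjlen : (List.replicate (s - j) a ++ mfst t).length < n := by
            rw [length_rep_append] at h ⊢; omega
          have hpos := (hU' (s - j) hjlen).2 rfl
          have hpow : (-1 : ℤ) ^ s * (-1 : ℤ) ^ j = (-1 : ℤ) ^ (s - j) := by
            have hse : s + j = (s - j) + 2 * j := by omega
            rw [← pow_add, hse, pow_add, pow_mul]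
            norm_num
          set M := vL n hn L' ⟨List.replicate (s - j) a ++ mfst t, hjlen⟩ with hMdef
          have h2 : (-1 : ℤ) ^ s * sg t * ((-1 : ℤ) ^ j * M)
              = (-1 : ℤ) ^ (s - j) * sg t * M := by
            linear_combination sg t * M * hpow
          rw [h2]
          exact hpos
    -- MAIN part
    have hMAIN : ∀ (h : (mfst (x :: L')).length < n),
        0 < sg (x :: L') * vL n hn (x :: L') ⟨mfst (x :: L'), h⟩ := by
      intro h
      obtain ⟨r, t', hr, he, hh, _⟩ := run_decomp x L' hred
      obtain ⟨a, b⟩ := x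
      have hmf : mfst ((a, b) :: L') = List.replicate r a ++ mfst t' := by
        rw [he]
        exact mfst_rep_append a b r t'
      have h2 : (List.replicate r a ++ mfst t').length < n := by rw [← hmf]; exact h
      have hcoe : vL n hn ((a, b) :: L') ⟨mfst ((a, b) :: L'), h⟩
          = vL n hn ((a, b) :: L') ⟨List.replicate r a ++ mfst t', h2⟩ :=
        coeff_congr n _ _ _ hmf
      have hsg : sg ((a, b) :: L') = (cond b 1 (-1 : ℤ)) ^ r * sg t' := by
        rw [show ((a, b) :: L') = List.replicate r (a, b) ++ t' from he, sg_rep_append]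
      have hU2 := hU a b r t' he hr hh r h2
      rw [hcoe, hsg]
      cases b with
      | true =>
        have := (hU2.1 rfl).1 (le_refl r)
        simpa using this
      | false =>
        have := hU2.2 rfl
        simpa using this
    exact ⟨hSUP, hMAIN, hU⟩

lemma coe_factor (x : α × Bool) :
    ((cond x.2 (un n x.1) (un n x.1)⁻¹ : (E α n)ˣ) : E α n) = Fe n x := by
  obtain ⟨a, b⟩ := x
  cases b with
  | true => rfl
  | false => rfl

lemma mu_mk_apply (hn : 0 < n) (L : List (α × Bool)) :
    ((mu n (FreeGroup.mk L) : (E α n)ˣ) : E α n) (bv n [] (by simpa using hn)) = vL n hn L := by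
  rw [mu, FreeGroup.lift_mk, vL]
  have hc : ((List.map (fun x => bif x.2 then un n x.1 else (un n x.1)⁻¹) L).prod : E α n)
      = (List.map (Fe n) L).prod := by
    rw [← Units.coeHom_apply, map_list_prod, List.map_map]
    congr 1
    apply List.map_congr_left
    intro x _
    exact coe_factor n x
  rw [hc]

/-- helper: failure of Chain' gives an adjacent bad pair -/
lemma chain'_decomp {β : Type*} (R : β → β → Prop) :
    ∀ (l : List β), ¬ l.Chain' R →
      ∃ (l₁ : List β) (a b : β) (l₂ : List β), l = l₁ ++ a :: b :: l₂ ∧ ¬ R a b := by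
  intro l
  induction l with
  | nil => intro hc; exact absurd List.isChain_nil hc
  | cons x t ih =>
    intro hc
    cases t with
    | nil => exact absurd (List.isChain_singleton x) hc
    | cons y t' =>
      unfold List.Chain' at hc
      rw [List.isChain_cons_cons] at hc
      push_neg at hc
      by_cases hR : R x y
      · obtain ⟨l₁, a, b, l₂, he, hr⟩ := ih (hc hR)
        exact ⟨x :: l₁, a, b, l₂, by rw [he]; rfl, hr⟩
      · exact ⟨[], x, y, t', rfl, hR⟩

lemma red_toWord (g : FreeGroup α) : Red g.toWord := by
  by_contra hc
  obtain ⟨l₁, p, q, l₂, he, hr⟩ := chain'_decomp _ _ hc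
  push_neg at hr
  obtain ⟨h1, h2⟩ := hr
  have hq : q = (p.1, !p.2) := by
    obtain ⟨qa, qb⟩ := q
    obtain ⟨pa, pb⟩ := p
    simp only at h1 h2
    rw [← h1]
    simp only [Prod.mk.injEq, true_and]
    cases pb <;> cases qb <;> simp_all
  rw [hq] at he
  obtain ⟨pa, pb⟩ := p
  exact FreeGroup.reduce.not (p := False) (L₁ := g.toWord) (L₂ := l₁) (L₃ := l₂)
    (x := pa) (b := pb) (by rw [FreeGroup.reduce_toWord]; exact he)

/-- Part 2: a nontrivial element has nontrivial image under `mu` for large enough n. -/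
lemma mu_ne_one (g : FreeGroup α) (hg : g ≠ 1) (hn : n = g.toWord.length + 1) :
    mu n g ≠ 1 := by
  intro hmu
  have hn0 : 0 < n := by omega
  have hred : Red g.toWord := red_toWord g
  have hlen : (mfst g.toWord).length < n := by rw [length_mfst]; omega
  have hpos := (master n hn0 g.toWord hred).2.1 hlen
  have happ : vL n hn0 g.toWord = bv n [] (by simpa using hn0) := by
    rw [← mu_mk_apply n hn0 g.toWord, FreeGroup.mk_toWord, hmu, Units.val_one,
      Module.End.one_apply]
  rw [happ] at hpos
  have hLne : g.toWord ≠ [] := fun hc => hg (FreeGroup.toWord_eq_nil_iff.1 hc)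
  have hz : bv n [] (by simpa using hn0 : ([] : List α).length < n) ⟨mfst g.toWord, hlen⟩ = 0 := by
    rw [bv, Finsupp.single_apply, if_neg]
    intro hc
    apply hLne
    have := congrArg Subtype.val hc
    simp only at this
    rw [← List.length_eq_zero_iff, ← length_mfst, ← this]
    rfl
  rw [hz, mul_zero] at hpos
  exact lt_irrefl 0 hpos

end MagnusAux

/-- Free groups are residually nilpotent: the intersection of all the terms of the
lower central series of a free group is trivial. (Mathlib indexing:
`lowerCentralSeries G k = Γ_{k+1} G`.) -/
theorem freeGroup_residually_nilpotent (α : Type*) :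
    ⨅ k : ℕ, (⊤ : Subgroup (FreeGroup α)).lowerCentralSeries k = ⊥ := by
  classical
  rw [eq_bot_iff]
  intro g hg
  rw [Subgroup.mem_bot]
  by_contra hg1
  set n := g.toWord.length + 1 with hn
  have h1 : MagnusAux.mu n g = 1 := MagnusAux.mu_eq_one α n (by omega) g hg
  exact MagnusAux.mu_ne_one n g hg1 hn h1
end
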